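/- arXiv:1203.4183 — 5 statements merged into one kernel-verified Lean document; each statement's English description precedes it below -/
import Mathlib

section
/- Let λ > 0 and α > 0 be real numbers. Then for every real y with |y| ≤ λ/2, the sum over positive integers satisfies ∑_{k=1}^∞ exp(α(1 − (y + kλ)²)) ≤ exp(α − αλ²/4) · (2 − exp(−αλ²)) / (1 − exp(−αλ²)). (In particular the series on the left converges.) -/
/-!
Since `|y| ≤ λ/2`, the point `y + (k+1)λ` is at distance at least `(k + 1/2)λ` from the origin, so
`(y + (k+1)λ)² ≥ kλ² + λ²/4` and the `k`-th term is at most `C qᵏ` with `C = exp(α - αλ²/4)` and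
`q = exp(-αλ²) < 1`. The geometric series then gives `C / (1 - q)`, which is at most the stated
bound because `2 - q ≥ 1`.
-/

open Real

theorem summable_and_tsum_le_of_le_geometric {f : ℕ → ℝ} {C q : ℝ} (hf : ∀ k, 0 ≤ f k)
    (hle : ∀ k, f k ≤ C * q ^ k) (hq0 : 0 ≤ q) (hq1 : q < 1) :
    Summable f ∧ ∑' k, f k ≤ C / (1 - q) := by
  have hgeo : Summable (fun k : ℕ => C * q ^ k) :=
    (summable_geometric_of_lt_one hq0 hq1).mul_left C
  have hsum : Summable f := hgeo.of_nonneg_of_le hf hle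
  refine ⟨hsum, ?_⟩
  calc ∑' k, f k ≤ ∑' k : ℕ, C * q ^ k := hsum.tsum_le_tsum hle hgeo
    _ = C / (1 - q) := by rw [tsum_mul_left, tsum_geometric_of_lt_one hq0 hq1, div_eq_mul_inv]

theorem nat_mul_sq_add_sq_div_four_le {lam y : ℝ} (hy : |y| ≤ lam / 2) (k : ℕ) :
    k * lam ^ 2 + lam ^ 2 / 4 ≤ (y + (k + 1) * lam) ^ 2 := by
  have hlam : 0 ≤ lam := by linarith [abs_nonneg y]
  have hk : (0 : ℝ) ≤ k := k.cast_nonneg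
  have hlow : (k + 1 / 2) * lam ≤ y + (k + 1) * lam := by linarith [neg_abs_le y]
  have hsq : ((k + 1 / 2) * lam) ^ 2 ≤ (y + (k + 1) * lam) ^ 2 :=
    pow_le_pow_left₀ (by positivity) hlow 2
  nlinarith [mul_nonneg (mul_nonneg hk hk) (sq_nonneg lam)]

theorem exp_mul_one_sub_sq_le {lam α y : ℝ} (hα : 0 ≤ α) (hy : |y| ≤ lam / 2) (k : ℕ) :
    exp (α * (1 - (y + (k + 1) * lam) ^ 2)) ≤
      exp (α - α * lam ^ 2 / 4) * exp (-(α * lam ^ 2)) ^ k := by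
  rw [← exp_nat_mul, ← exp_add, exp_le_exp]
  nlinarith [mul_le_mul_of_nonneg_left (nat_mul_sq_add_sq_div_four_le hy k) hα]

/-- For λ > 0, α > 0 and |y| ≤ λ/2, the series
∑_{k=1}^∞ exp(α(1 − (y + kλ)²)) converges and is bounded by
exp(α − αλ²/4) · (2 − exp(−αλ²)) / (1 − exp(−αλ²)). -/
theorem stmt_0 (lam α : ℝ) (hlam : 0 < lam) (hα : 0 < α)
    (y : ℝ) (hy : |y| ≤ lam / 2) :
    Summable (fun k : ℕ => Real.exp (α * (1 - (y + (k + 1 : ℝ) * lam) ^ 2))) ∧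
    ∑' k : ℕ, Real.exp (α * (1 - (y + (k + 1 : ℝ) * lam) ^ 2)) ≤
      Real.exp (α - α * lam ^ 2 / 4) *
        (2 - Real.exp (-(α * lam ^ 2))) / (1 - Real.exp (-(α * lam ^ 2))) := by
  set q := exp (-(α * lam ^ 2))
  set C := exp (α - α * lam ^ 2 / 4)
  have hq1 : q < 1 := exp_lt_one_iff.mpr (by simp only [neg_neg_iff_pos]; positivity)
  obtain ⟨hsum, hbound⟩ := summable_and_tsum_le_of_le_geometric (fun k => (exp_pos _).le)
    (exp_mul_one_sub_sq_le hα.le hy) (exp_pos _).le hq1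
  refine ⟨hsum, hbound.trans ?_⟩
  have hC_le : C ≤ C * (2 - q) := le_mul_of_one_le_right (exp_pos _).le (by linarith)
  exact div_le_div_of_nonneg_right hC_le (by linarith)
end

section
/- Let λ > 0 and α > 0 be real numbers, and define C₁,λ(α) = exp(α) + 2·exp(α − αλ²/4) · (2 − exp(−αλ²)) / (1 − exp(−αλ²)). Then for every real y with |y| ≤ λ/2, the family (exp(α(1 − (y + kλ)²)))_{k ∈ ℤ} is summable and ∑_{k ∈ ℤ} exp(α(1 − (y + kλ)²)) ≤ C₁,λ(α); consequently sup_{|y| ≤ λ/2} ∑_{k ∈ ℤ} exp(α(1 − (y + kλ)²)) ≤ C₁,λ(α). -/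
/-!
For `|y| ≤ λ/2` and `n : ℕ` one has `y + (n + 1)λ ≥ (n + 1/2)λ ≥ 0`, hence
`(y + (n + 1)λ)² ≥ λ²/4 + nλ²`. So the `k = n + 1` term of the lattice sum is at most
`exp(α - αλ²/4) qⁿ` with `q = exp(-αλ²) < 1`, and the same holds for `k = -(n + 1)` after
replacing `y` by `-y`. Summing the two geometric tails and the `k = 0` term `≤ exp α` gives
`exp α + 2 exp(α - αλ²/4)/(1 - q)`, which is at most `C₁,λ(α)` because `2 - q ≥ 1`.
-/

open Real

lemma two_mul_div_one_sub_le_two_mul_mul_div {c q : ℝ} (hc : 0 ≤ c) (hq : q < 1) :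
    2 * (c / (1 - q)) ≤ 2 * c * (2 - q) / (1 - q) := by
  rw [mul_assoc, mul_div_assoc]
  gcongr
  exact le_mul_of_one_le_right hc (by linarith)

section LatticeGaussianSum

variable {α lam y : ℝ}

lemma sq_add_succ_mul_ge (hy : |y| ≤ lam / 2) (n : ℕ) :
    lam ^ 2 / 4 + n * lam ^ 2 ≤ (y + (n + 1) * lam) ^ 2 := by
  have hlam : 0 ≤ lam := by linarith [abs_nonneg y]
  have hn : (0 : ℝ) ≤ n := n.cast_nonneg
  have hlow : (n + 1 / 2) * lam ≤ y + (n + 1) * lam := by linarith [neg_abs_le y]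
  nlinarith [mul_self_le_mul_self (by positivity) hlow,
    mul_nonneg (mul_nonneg hn hn) (sq_nonneg lam)]

lemma exp_sub_sq_add_succ_mul_le (hα : 0 ≤ α) (hy : |y| ≤ lam / 2) (n : ℕ) :
    exp (α * (1 - (y + (n + 1) * lam) ^ 2)) ≤
      exp (α - α * lam ^ 2 / 4) * exp (-(α * lam ^ 2)) ^ n := by
  rw [← exp_nat_mul, ← exp_add, exp_le_exp]
  nlinarith [mul_le_mul_of_nonneg_left (sq_add_succ_mul_ge hy n) hα]

lemma summable_exp_sub_sq_add_succ_mul_and_tsum_le (hα : 0 < α) (hlam : 0 < lam)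
    (hy : |y| ≤ lam / 2) :
    Summable (fun n : ℕ => exp (α * (1 - (y + (n + 1) * lam) ^ 2))) ∧
      ∑' n : ℕ, exp (α * (1 - (y + (n + 1) * lam) ^ 2)) ≤
        exp (α - α * lam ^ 2 / 4) / (1 - exp (-(α * lam ^ 2))) := by
  have hq : exp (-(α * lam ^ 2)) < 1 := exp_lt_one_iff.mpr (by simp; positivity)
  have hgeom :=
    (summable_geometric_of_lt_one (exp_pos _).le hq).mul_left (exp (α - α * lam ^ 2 / 4))
  have hle := exp_sub_sq_add_succ_mul_le hα.le hy
  have hsum := hgeom.of_nonneg_of_le (fun _ => (exp_pos _).le) hle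
  refine ⟨hsum, (hsum.tsum_le_tsum hle hgeom).trans_eq ?_⟩
  rw [tsum_mul_left, tsum_geometric_of_lt_one (exp_pos _).le hq, ← div_eq_mul_inv]

lemma summable_exp_sub_sq_add_int_mul_and_tsum_le (hα : 0 < α) (hlam : 0 < lam)
    (hy : |y| ≤ lam / 2) :
    Summable (fun k : ℤ => exp (α * (1 - (y + k * lam) ^ 2))) ∧
      ∑' k : ℤ, exp (α * (1 - (y + k * lam) ^ 2)) ≤
        exp α + 2 * (exp (α - α * lam ^ 2 / 4) / (1 - exp (-(α * lam ^ 2)))) := by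
  obtain ⟨hpos, hpos_le⟩ := summable_exp_sub_sq_add_succ_mul_and_tsum_le hα hlam hy
  obtain ⟨hneg, hneg_le⟩ :=
    summable_exp_sub_sq_add_succ_mul_and_tsum_le hα hlam (y := -y) (by rwa [abs_neg])
  have hpos_eq : (fun n : ℕ => exp (α * (1 - (y + ((n + 1 : ℤ) : ℝ) * lam) ^ 2))) =
      fun n : ℕ => exp (α * (1 - (y + (n + 1) * lam) ^ 2)) := by
    funext n; push_cast; rfl
  have hneg_eq : (fun n : ℕ => exp (α * (1 - (y + ((-(n + 1) : ℤ) : ℝ) * lam) ^ 2))) =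
      fun n : ℕ => exp (α * (1 - (-y + (n + 1) * lam) ^ 2)) := by
    funext n; push_cast; ring_nf
  have hzero : exp (α * (1 - (y + ((0 : ℤ) : ℝ) * lam) ^ 2)) ≤ exp α := by
    rw [exp_le_exp]; nlinarith [sq_nonneg y]
  rw [← hpos_eq] at hpos hpos_le
  rw [← hneg_eq] at hneg hneg_le
  let f : ℤ → ℝ := fun k => exp (α * (1 - (y + k * lam) ^ 2))
  refine ⟨Summable.of_add_one_of_neg_add_one (f := f) hpos hneg, ?_⟩
  rw [tsum_of_add_one_of_neg_add_one (f := f) hpos hneg]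
  linarith

end LatticeGaussianSum

/-- For λ > 0, α > 0 and C₁,λ(α) = exp(α) + 2·exp(α − αλ²/4)·(2 − exp(−αλ²))/(1 − exp(−αλ²)),
for every |y| ≤ λ/2 the family (exp(α(1 − (y + kλ)²)))_{k ∈ ℤ} is summable with sum ≤ C₁,λ(α);
consequently the supremum over |y| ≤ λ/2 of the sums is ≤ C₁,λ(α). -/
theorem stmt_2 (lam α : ℝ) (hlam : 0 < lam) (hα : 0 < α) :
    (∀ y : ℝ, |y| ≤ lam / 2 →
      Summable (fun k : ℤ => Real.exp (α * (1 - (y + (k : ℝ) * lam) ^ 2))) ∧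
      ∑' k : ℤ, Real.exp (α * (1 - (y + (k : ℝ) * lam) ^ 2)) ≤
        Real.exp α + 2 * Real.exp (α - α * lam ^ 2 / 4) *
          (2 - Real.exp (-(α * lam ^ 2))) / (1 - Real.exp (-(α * lam ^ 2)))) ∧
    ⨆ y ∈ {y : ℝ | |y| ≤ lam / 2},
        ∑' k : ℤ, Real.exp (α * (1 - (y + (k : ℝ) * lam) ^ 2)) ≤
      Real.exp α + 2 * Real.exp (α - α * lam ^ 2 / 4) *
        (2 - Real.exp (-(α * lam ^ 2))) / (1 - Real.exp (-(α * lam ^ 2))) := by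
  have hq : exp (-(α * lam ^ 2)) < 1 := exp_lt_one_iff.mpr (by simp; positivity)
  have hweaken : exp α + 2 * (exp (α - α * lam ^ 2 / 4) / (1 - exp (-(α * lam ^ 2)))) ≤
      exp α + 2 * exp (α - α * lam ^ 2 / 4) *
        (2 - exp (-(α * lam ^ 2))) / (1 - exp (-(α * lam ^ 2))) :=
    add_le_add_right (two_mul_div_one_sub_le_two_mul_mul_div (exp_pos _).le hq) _
  have hbound (y : ℝ) (hy : |y| ≤ lam / 2) :=
    (summable_exp_sub_sq_add_int_mul_and_tsum_le hα hlam hy).imp_right (·.trans hweaken)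
  have hC : 0 ≤ exp α + 2 * exp (α - α * lam ^ 2 / 4) *
      (2 - exp (-(α * lam ^ 2))) / (1 - exp (-(α * lam ^ 2))) :=
    (tsum_nonneg fun _ => (exp_pos _).le).trans (hbound 0 (by simpa using half_pos hlam |>.le)).2
  exact ⟨hbound, Real.iSup_le (fun y => Real.iSup_le (fun hy => (hbound y hy).2) hC) hC⟩
end

section
/- Let λ > 0 and 0 < θ < 1, define w : ℂ → ℂ by w(θ) = 1 and w(z) = (λ/(2π)) · (exp((2π/λ)(z − θ)) − 1)/(z − θ) for z ≠ θ, and set m(λ) = (λ/(2π)) · (1 + exp(4π/λ)). Then for every z in the closed strip 𝕊 = {z ∈ ℂ : 0 ≤ Re z ≤ 1}, one has |w(z)| ≤ m(λ). -/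
open Complex

/-! Writing `c = 2π/λ` and `v = c (z - θ)`, one has `w z = (exp v - 1) / v` with `Re v ≤ c` on the
strip. Near `0` the bound `‖exp v - 1‖ ≤ 2‖v‖` applies, and away from `0` the trivial bound
`‖exp v - 1‖ ≤ exp (Re v) + 1`; together `‖w z‖ ≤ exp c + 1`, which is at most
`c⁻¹ (1 + exp (2c)) = m(λ)`. -/

theorem Complex.norm_exp_sub_one_le_of_re_le {v : ℂ} {a : ℝ} (ha : 0 ≤ a) (hv : v.re ≤ a) :
    ‖exp v - 1‖ ≤ (Real.exp a + 1) * ‖v‖ := by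
  have hexp : 1 ≤ Real.exp a := Real.one_le_exp ha
  rcases le_or_gt ‖v‖ 1 with hsmall | hlarge
  · calc ‖exp v - 1‖ ≤ 2 * ‖v‖ := norm_exp_sub_one_le hsmall
      _ ≤ (Real.exp a + 1) * ‖v‖ := by gcongr; linarith
  · calc ‖exp v - 1‖ ≤ ‖exp v‖ + ‖(1 : ℂ)‖ := norm_sub_le _ _
      _ = Real.exp v.re + 1 := by rw [norm_exp, norm_one]
      _ ≤ Real.exp a + 1 := by gcongr
      _ ≤ (Real.exp a + 1) * ‖v‖ := le_mul_of_one_le_right (by positivity) hlarge.le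

theorem Complex.norm_exp_sub_one_div_le_of_re_le {v : ℂ} {a : ℝ} (ha : 0 ≤ a) (hv : v.re ≤ a) :
    ‖(exp v - 1) / v‖ ≤ Real.exp a + 1 := by
  rcases eq_or_ne v 0 with rfl | hv0
  · simp only [div_zero, norm_zero]
    positivity
  rw [norm_div, div_le_iff₀ (norm_pos_iff.mpr hv0)]
  exact norm_exp_sub_one_le_of_re_le ha hv

theorem Real.exp_add_one_le_inv_mul_one_add_exp_two_mul {c : ℝ} (hc : 0 < c) :
    Real.exp c + 1 ≤ c⁻¹ * (1 + Real.exp (2 * c)) := by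
  have h1 : c + 1 ≤ Real.exp c := Real.add_one_le_exp c
  have h2 : Real.exp (2 * c) = Real.exp c * Real.exp c := by rw [two_mul, Real.exp_add]
  rw [le_inv_mul_iff₀ hc, h2]
  nlinarith [Real.exp_pos c]

theorem stmt_5_general (lam θ : ℝ) (hlam : 0 < lam) (hθ0 : 0 < θ)
    (w : ℂ → ℂ)
    (hwθ : w (θ : ℂ) = 1)
    (hw : ∀ z : ℂ, z ≠ (θ : ℂ) →
      w z = ((lam : ℂ) / (2 * Real.pi)) *
        (Complex.exp (((2 * Real.pi : ℝ) / lam : ℝ) * (z - (θ : ℂ))) - 1) / (z - (θ : ℂ))) :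
    ∀ z : ℂ, 0 ≤ z.re → z.re ≤ 1 →
      ‖w z‖ ≤ lam / (2 * Real.pi) * (1 + Real.exp (4 * Real.pi / lam)) := by
  intro z _ hz1
  set c : ℝ := 2 * Real.pi / lam with hc_def
  have hc : 0 < c := by positivity
  have hm : lam / (2 * Real.pi) * (1 + Real.exp (4 * Real.pi / lam)) =
      c⁻¹ * (1 + Real.exp (2 * c)) := by
    rw [hc_def, inv_div]; ring_nf
  rw [hm]
  refine le_trans ?_ (Real.exp_add_one_le_inv_mul_one_add_exp_two_mul hc)
  rcases eq_or_ne z θ with rfl | hzθ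
  · rw [hwθ, norm_one]
    linarith [Real.exp_pos c]
  have hu : z - θ ≠ 0 := sub_ne_zero.mpr hzθ
  have hwz : w z = (exp (c * (z - θ)) - 1) / (c * (z - θ)) := by
    rw [hw z hzθ, hc_def]
    push_cast
    field_simp
  have hre : (c * (z - θ)).re ≤ c := by
    simp only [re_ofReal_mul, sub_re, ofReal_re]
    nlinarith
  rw [hwz]
  exact norm_exp_sub_one_div_le_of_re_le hc.le hre

/-- For λ > 0, 0 < θ < 1, w as in the paper and m(λ) = (λ/(2π))·(1 + exp(4π/λ)),
one has |w(z)| ≤ m(λ) for every z in the closed strip 0 ≤ Re z ≤ 1. -/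
theorem stmt_5 (lam θ : ℝ) (hlam : 0 < lam) (hθ0 : 0 < θ) (hθ1 : θ < 1)
    (w : ℂ → ℂ)
    (hwθ : w (θ : ℂ) = 1)
    (hw : ∀ z : ℂ, z ≠ (θ : ℂ) →
      w z = ((lam : ℂ) / (2 * Real.pi)) *
        (Complex.exp (((2 * Real.pi : ℝ) / lam : ℝ) * (z - (θ : ℂ))) - 1) / (z - (θ : ℂ))) :
    ∀ z : ℂ, 0 ≤ z.re → z.re ≤ 1 →
      ‖w z‖ ≤ lam / (2 * Real.pi) * (1 + Real.exp (4 * Real.pi / lam)) :=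
  stmt_5_general lam θ hlam hθ0 w hwθ hw
end

section
/- Let X be a complex Banach space, let λ > 0, α > 0, 0 < θ < 1, let g : ℂ → ℂ be entire with |g(z)| ≤ M for all z in the strip 𝕊 = {z ∈ ℂ : 0 ≤ Re z ≤ 1}, and let f : ℂ → X be continuous on 𝕊, analytic (complex differentiable) on the open strip 𝕊° = {z : 0 < Re z < 1}, and satisfy ‖f(z)‖ ≤ B for all z ∈ 𝕊. Define F_α(z) = ∑_{k ∈ ℤ} exp(α(z − θ + ikλ)²) · g(z + ikλ) · f(z + ikλ) for z ∈ 𝕊. Then F_α is analytic on the open strip 𝕊°. -/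
/-!
Expanding α(w − θ + ikλ)² shows that the `k`-th Gaussian factor is `exp(α(w − θ)²)` times the
Jacobi theta term with parameters `αλ(w − θ)/π` and `iαλ²/π`. The uniform bounds for theta terms
on `|Im z| ≤ S`, `Im τ ≥ T`, together with the bound `|g|·‖f‖ ≤ MB` on the strip, give a summable
majorant of the series near every point of the open strip, so the sum is holomorphic there as a
locally uniform limit of holomorphic functions.
-/

open Complex
open scoped Real

lemma cexp_mul_add_intCast_mul_I_sq (a b u : ℂ) (k : ℤ) :
    cexp (a * (u + k * b * I) ^ 2) =
      cexp (a * u ^ 2) * jacobiTheta₂_term k (a * b * u / π) (I * a * b ^ 2 / π) := by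
  have hπ : (π : ℂ) ≠ 0 := ofReal_ne_zero.mpr Real.pi_ne_zero
  rw [jacobiTheta₂_term, ← Complex.exp_add]
  congr 1
  field_simp
  ring

lemma norm_cexp_mul_add_intCast_mul_I_sq_le {a b R : ℝ} (ha : 0 < a) (hb : b ≠ 0) {u : ℂ}
    (hu : ‖u‖ ≤ R) (k : ℤ) :
    ‖cexp (a * (u + k * b * I) ^ 2)‖ ≤
      rexp (a * R ^ 2) * rexp (-π * (a * b ^ 2 / π * k ^ 2 - 2 * (a * |b| * R / π) * |k|)) := by
  rw [cexp_mul_add_intCast_mul_I_sq, norm_mul]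
  gcongr
  · refine (norm_exp_le_exp_norm _).trans (Real.exp_le_exp.mpr ?_)
    rw [norm_mul, norm_pow, norm_real, Real.norm_of_nonneg ha.le]
    gcongr
  · refine norm_jacobiTheta₂_term_le (by positivity) ?_ ?_ k
    · have him : (↑a * ↑b * u / ↑π : ℂ).im = a * b / π * u.im := by
        simp only [div_ofReal_im, mul_im, mul_re, ofReal_re, ofReal_im, mul_zero, sub_zero,
          zero_mul, add_zero]
        ring
      rw [him, abs_mul, abs_div, abs_mul, abs_of_pos ha, abs_of_pos Real.pi_pos]
      calc a * |b| / π * |u.im| ≤ a * |b| / π * R := by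
            gcongr; exact (abs_im_le_norm u).trans hu
        _ = a * |b| * R / π := by ring
    · simp [div_ofReal_im, ← ofReal_pow]

theorem differentiableOn_tsum_cexp_mul_sq_smul_translate {X : Type*} [NormedAddCommGroup X]
    [NormedSpace ℂ X] [CompleteSpace X] {a b : ℝ} (ha : 0 < a) (hb : b ≠ 0) (c : ℂ)
    {V : Set ℂ} (hV : IsOpen V) (hV_add : ∀ w ∈ V, ∀ k : ℤ, w + k * b * I ∈ V)
    {H : ℂ → X} (hH : DifferentiableOn ℂ H V) {C : ℝ} (hHC : ∀ w ∈ V, ‖H w‖ ≤ C) :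
    DifferentiableOn ℂ
      (fun w => ∑' k : ℤ, cexp (a * (w - c + k * b * I) ^ 2) • H (w + k * b * I)) V := by
  intro z hz
  set R := ‖z - c‖ + 1
  set U := V ∩ Metric.ball z 1
  have hU : IsOpen U := hV.inter Metric.isOpen_ball
  have hC : 0 ≤ C := (norm_nonneg _).trans (hHC z hz)
  set u : ℤ → ℝ := fun k =>
    rexp (a * R ^ 2) * rexp (-π * (a * b ^ 2 / π * k ^ 2 - 2 * (a * |b| * R / π) * |k|)) * C
  have hu : Summable u := by
    have := summable_pow_mul_jacobiTheta₂_term_bound (a * |b| * R / π)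
      (T := a * b ^ 2 / π) (by positivity) 0
    simp only [pow_zero, one_mul] at this
    exact (this.mul_left _).mul_right _
  have hdiff (k : ℤ) : DifferentiableOn ℂ
      (fun w => cexp (a * (w - c + k * b * I) ^ 2) • H (w + k * b * I)) U := by
    have hH_add : DifferentiableOn ℂ (fun w => H (w + k * b * I)) V :=
      hH.comp (differentiableOn_id.add_const _) fun w hw => hV_add w hw k
    exact ((by fun_prop : Differentiable ℂ fun w => cexp (a * (w - c + k * b * I) ^ 2))
      |>.differentiableOn.smul hH_add).mono Set.inter_subset_left
  have hbound (k : ℤ) (w : ℂ) (hw : w ∈ U) :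
      ‖cexp (a * (w - c + k * b * I) ^ 2) • H (w + k * b * I)‖ ≤ u k := by
    have hwR : ‖w - c‖ ≤ R := by
      have := norm_sub_le_norm_sub_add_norm_sub w z c
      have : ‖w - z‖ < 1 := mem_ball_iff_norm.mp hw.2
      linarith
    rw [norm_smul]
    exact mul_le_mul (norm_cexp_mul_add_intCast_mul_I_sq_le ha hb hwR k)
      (hHC _ (hV_add w hw.1 k)) (norm_nonneg _) (by positivity)
  exact ((differentiableOn_tsum_of_summable_norm hu hdiff hU hbound).differentiableAt
    (hU.mem_nhds ⟨hz, Metric.mem_ball_self one_pos⟩)).differentiableWithinAt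

theorem stmt_8_general {X : Type*} [NormedAddCommGroup X] [NormedSpace ℂ X] [CompleteSpace X]
    (lam α θ : ℝ) (hlam : 0 < lam) (hα : 0 < α)
    (g : ℂ → ℂ) (hg : Differentiable ℂ g)
    (M : ℝ) (hgM : ∀ z : ℂ, 0 ≤ z.re → z.re ≤ 1 → ‖g z‖ ≤ M)
    (f : ℂ → X)
    (hfd : ∀ z : ℂ, 0 < z.re → z.re < 1 → DifferentiableAt ℂ f z)
    (B : ℝ) (hfB : ∀ z : ℂ, 0 ≤ z.re → z.re ≤ 1 → ‖f z‖ ≤ B) :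
    ∀ z : ℂ, 0 < z.re → z.re < 1 →
      DifferentiableAt ℂ (fun w : ℂ => ∑' k : ℤ,
        (Complex.exp ((α : ℂ) * (w - (θ : ℂ) + (k : ℂ) * (lam : ℂ) * Complex.I) ^ 2) *
          g (w + (k : ℂ) * (lam : ℂ) * Complex.I)) •
            f (w + (k : ℂ) * (lam : ℂ) * Complex.I)) z := by
  intro z hz0 hz1
  have hstrip : IsOpen (re ⁻¹' Set.Ioo 0 1) := isOpen_Ioo.preimage continuous_re
  have hM : 0 ≤ M := (norm_nonneg _).trans (hgM 0 le_rfl zero_le_one)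
  have hgf : DifferentiableOn ℂ (fun w => g w • f w) (re ⁻¹' Set.Ioo 0 1) := fun w hw =>
    ((hg w).smul (hfd w hw.1 hw.2)).differentiableWithinAt
  have hgf_le (w : ℂ) (hw : w ∈ re ⁻¹' Set.Ioo 0 1) : ‖g w • f w‖ ≤ M * B := by
    rw [norm_smul]
    exact mul_le_mul (hgM w hw.1.le hw.2.le) (hfB w hw.1.le hw.2.le) (norm_nonneg _) hM
  simp only [mul_smul]
  exact (differentiableOn_tsum_cexp_mul_sq_smul_translate hα hlam.ne' θ hstrip
    (fun w hw k => by simpa using hw) hgf hgf_le).differentiableAt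
      (hstrip.mem_nhds ⟨hz0, hz1⟩)

/-- With X a complex Banach space, λ, α > 0, 0 < θ < 1, g entire with |g| ≤ M on
the strip 𝕊 = {0 ≤ Re z ≤ 1}, and f continuous on 𝕊, complex differentiable on the open strip
and with ‖f‖ ≤ B on 𝕊, the function F_α(z) = ∑_{k ∈ ℤ} exp(α(z − θ + ikλ)²)·g(z + ikλ)·f(z + ikλ)
is analytic on the open strip 0 < Re z < 1. -/
theorem stmt_8 {X : Type*} [NormedAddCommGroup X] [NormedSpace ℂ X] [CompleteSpace X]
    (lam α θ : ℝ) (hlam : 0 < lam) (hα : 0 < α) (hθ0 : 0 < θ) (hθ1 : θ < 1)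
    (g : ℂ → ℂ) (hg : Differentiable ℂ g)
    (M : ℝ) (hgM : ∀ z : ℂ, 0 ≤ z.re → z.re ≤ 1 → ‖g z‖ ≤ M)
    (f : ℂ → X)
    (hfc : ContinuousOn f {z : ℂ | 0 ≤ z.re ∧ z.re ≤ 1})
    (hfd : ∀ z : ℂ, 0 < z.re → z.re < 1 → DifferentiableAt ℂ f z)
    (B : ℝ) (hfB : ∀ z : ℂ, 0 ≤ z.re → z.re ≤ 1 → ‖f z‖ ≤ B) :
    ∀ z : ℂ, 0 < z.re → z.re < 1 →
      DifferentiableAt ℂ (fun w : ℂ => ∑' k : ℤ,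
        (Complex.exp ((α : ℂ) * (w - (θ : ℂ) + (k : ℂ) * (lam : ℂ) * Complex.I) ^ 2) *
          g (w + (k : ℂ) * (lam : ℂ) * Complex.I)) •
            f (w + (k : ℂ) * (lam : ℂ) * Complex.I)) z :=
  stmt_8_general lam α θ hlam hα g hg M hgM f hfd B hfB
end

section
/- Let X be a complex Banach space, let λ > 0, α > 0, 0 < θ < 1, let g : ℂ → ℂ be entire with |g(z)| ≤ M for all z in the strip 𝕊 = {z ∈ ℂ : 0 ≤ Re z ≤ 1}, and let f : ℂ → X satisfy ‖f(z)‖ ≤ B for all z ∈ 𝕊. Define F_α(z) = ∑_{k ∈ ℤ} exp(α(z − θ + ikλ)²) · g(z + ikλ) · f(z + ikλ), and set C₁,λ(α) = exp(α) + 2·exp(α − αλ²/4) · (2 − exp(−αλ²)) / (1 − exp(−αλ²)). Then for each j ∈ {0, 1} and each real y with |y| ≤ λ/2, if B_j is an upper bound for ‖f(j + it)‖ over all t ∈ ℝ, then ‖F_α(j + iy)‖ ≤ C₁,λ(α) · M · B_j. -/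
/-!
On the boundary line `Re z = j` the factors `g` and `f` are bounded by `M` and `B_j`, and
`|exp (α (j - θ + i t)²)| = exp (α ((j - θ)² - t²)) ≤ exp (α - α t²)` because `|j - θ| ≤ 1`.
So the series is dominated by `M B_j ∑_k exp (α - α (y + kλ)²)`. For `|y| ≤ λ/2` and `n ≥ 0`,
`|y ± (n + 1) λ| ≥ (n + 1/2) λ`, hence the terms with `k = ±(n + 1)` are at most
`exp (α - αλ²/4) · exp (-αλ²)ⁿ`, and summing the two geometric tails plus the `k = 0` term
`≤ exp α` gives a bound which is at most `C₁,λ(α)` since `2 - exp (-αλ²) ≥ 1`.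
-/

open Complex

theorem summable_and_tsum_le_of_geometric_tails {u : ℤ → ℝ} (hu : ∀ k, 0 ≤ u k) {a c r : ℝ}
    (hr0 : 0 ≤ r) (hr1 : r < 1) (h0 : u 0 ≤ a) (hpos : ∀ n : ℕ, u (n + 1) ≤ c * r ^ n)
    (hneg : ∀ n : ℕ, u (-(n + 1)) ≤ c * r ^ n) :
    Summable u ∧ ∑' k, u k ≤ a + 2 * (c / (1 - r)) := by
  have hgeo : HasSum (fun n : ℕ => c * r ^ n) (c / (1 - r)) := by
    simpa only [div_eq_mul_inv] using (hasSum_geometric_of_lt_one hr0 hr1).mul_left c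
  have hsum_pos : Summable fun n : ℕ => u (n + 1) :=
    .of_nonneg_of_le (fun _ => hu _) hpos hgeo.summable
  have hsum_neg : Summable fun n : ℕ => u (-(n + 1)) :=
    .of_nonneg_of_le (fun _ => hu _) hneg hgeo.summable
  have htsum_pos := hsum_pos.tsum_le_tsum hpos hgeo.summable
  have htsum_neg := hsum_neg.tsum_le_tsum hneg hgeo.summable
  rw [hgeo.tsum_eq] at htsum_pos htsum_neg
  refine ⟨.of_add_one_of_neg_add_one hsum_pos hsum_neg, ?_⟩
  rw [tsum_of_add_one_of_neg_add_one hsum_pos hsum_neg]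
  linarith

theorem add_sq_le_sq_add_succ_mul {lam y : ℝ} (hlam : 0 ≤ lam) (hy : -(lam / 2) ≤ y) (n : ℕ) :
    lam ^ 2 / 4 + n * lam ^ 2 ≤ (y + (n + 1) * lam) ^ 2 := by
  have hhalf : (n + 1 / 2) * lam ≤ y + (n + 1) * lam := by linarith
  have hsq := pow_le_pow_left₀ (by positivity) hhalf 2
  nlinarith [mul_nonneg (Nat.cast_nonneg n : (0 : ℝ) ≤ n) (sq_nonneg lam)]

theorem exp_sub_mul_sq_le_geometric {α lam y : ℝ} (hα : 0 ≤ α) (hlam : 0 ≤ lam)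
    (hy : -(lam / 2) ≤ y) (n : ℕ) :
    Real.exp (α - α * (y + (n + 1) * lam) ^ 2) ≤
      Real.exp (α - α * lam ^ 2 / 4) * Real.exp (-(α * lam ^ 2)) ^ n := by
  rw [← Real.exp_nat_mul, ← Real.exp_add, Real.exp_le_exp]
  nlinarith [mul_le_mul_of_nonneg_left (add_sq_le_sq_add_succ_mul hlam hy n) hα]

theorem summable_and_tsum_exp_sub_mul_sq_le {α lam y : ℝ} (hα : 0 < α) (hlam : 0 < lam)
    (hy : |y| ≤ lam / 2) :
    Summable (fun k : ℤ => Real.exp (α - α * (y + k * lam) ^ 2)) ∧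
      ∑' k : ℤ, Real.exp (α - α * (y + k * lam) ^ 2) ≤
        Real.exp α + 2 * (Real.exp (α - α * lam ^ 2 / 4) / (1 - Real.exp (-(α * lam ^ 2)))) := by
  obtain ⟨hy1, hy2⟩ := abs_le.mp hy
  refine summable_and_tsum_le_of_geometric_tails (fun _ => (Real.exp_pos _).le)
    (Real.exp_pos _).le (Real.exp_lt_one_iff.mpr (by nlinarith [mul_pos hα (pow_pos hlam 2)]))
    ?_ (fun n => ?_) (fun n => ?_)
  · simp only [Int.cast_zero, zero_mul, add_zero, Real.exp_le_exp]
    nlinarith [mul_nonneg hα.le (sq_nonneg y)]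
  · push_cast
    exact exp_sub_mul_sq_le_geometric hα.le hlam.le hy1 n
  · have hsym : (y + ((-(n + 1) : ℤ) : ℝ) * lam) ^ 2 = (-y + (n + 1) * lam) ^ 2 := by
      push_cast; ring
    rw [hsym]
    exact exp_sub_mul_sq_le_geometric hα.le hlam.le (by linarith) n

theorem norm_cexp_mul_sq_le {α a : ℝ} (hα : 0 ≤ α) (ha : |a| ≤ 1) (t : ℝ) :
    ‖cexp (α * ((a : ℂ) + t * I) ^ 2)‖ ≤ Real.exp (α - α * t ^ 2) := by
  have hre : (α * ((a : ℂ) + t * I) ^ 2).re = α * (a ^ 2 - t ^ 2) := by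
    simp [sq, mul_re, mul_im]
  rw [norm_exp, hre, Real.exp_le_exp]
  nlinarith [mul_le_mul_of_nonneg_left ((sq_le_one_iff_abs_le_one a).mpr ha) hα]

theorem norm_cexp_mul_sq_mul_smul_le {X : Type*} [NormedAddCommGroup X] [NormedSpace ℂ X]
    {α θ j M Bj : ℝ} {g : ℂ → ℂ} {f : ℂ → X} (hα : 0 ≤ α) (hjθ : |j - θ| ≤ 1)
    (hg : ∀ t : ℝ, ‖g (j + t * I)‖ ≤ M) (hf : ∀ t : ℝ, ‖f (j + t * I)‖ ≤ Bj) (t : ℝ) :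
    ‖(cexp (α * ((j : ℂ) - θ + t * I) ^ 2) * g (j + t * I)) • f (j + t * I)‖ ≤
      M * Bj * Real.exp (α - α * t ^ 2) := by
  have hM : 0 ≤ M := (norm_nonneg _).trans (hg 0)
  have hBj : 0 ≤ Bj := (norm_nonneg _).trans (hf 0)
  have hexp := norm_cexp_mul_sq_le hα hjθ t
  push_cast at hexp
  calc _ = ‖cexp (α * ((j : ℂ) - θ + t * I) ^ 2)‖ * ‖g (j + t * I)‖ * ‖f (j + t * I)‖ := by
        rw [norm_smul, norm_mul]
    _ ≤ Real.exp (α - α * t ^ 2) * M * Bj := by gcongr; exacts [hg t, hf t]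
    _ = _ := by ring

theorem stmt_11_general {X : Type*} [NormedAddCommGroup X] [NormedSpace ℂ X]
    (lam α θ : ℝ) (hlam : 0 < lam) (hα : 0 < α) (hθ0 : 0 < θ) (hθ1 : θ < 1)
    (g : ℂ → ℂ)
    (M : ℝ) (hgM : ∀ z : ℂ, 0 ≤ z.re → z.re ≤ 1 → ‖g z‖ ≤ M)
    (f : ℂ → X)
    (j : ℝ) (hj : j = 0 ∨ j = 1)
    (Bj : ℝ) (hBj : ∀ t : ℝ, ‖f ((j : ℂ) + (t : ℂ) * Complex.I)‖ ≤ Bj)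
    (y : ℝ) (hy : |y| ≤ lam / 2) :
    ‖∑' k : ℤ,
        (Complex.exp ((α : ℂ) *
            (((j : ℂ) + (y : ℂ) * Complex.I) - (θ : ℂ) + (k : ℂ) * (lam : ℂ) * Complex.I) ^ 2) *
          g (((j : ℂ) + (y : ℂ) * Complex.I) + (k : ℂ) * (lam : ℂ) * Complex.I)) •
            f (((j : ℂ) + (y : ℂ) * Complex.I) + (k : ℂ) * (lam : ℂ) * Complex.I)‖ ≤
      (Real.exp α + 2 * Real.exp (α - α * lam ^ 2 / 4) *
        (2 - Real.exp (-(α * lam ^ 2))) / (1 - Real.exp (-(α * lam ^ 2)))) * M * Bj := by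
  obtain ⟨hj0, hj1⟩ : 0 ≤ j ∧ j ≤ 1 := by rcases hj with rfl | rfl <;> norm_num
  have hM : 0 ≤ M := (norm_nonneg _).trans (hgM 0 le_rfl zero_le_one)
  have hBj0 : 0 ≤ Bj := (norm_nonneg _).trans (hBj 0)
  have hr1 : Real.exp (-(α * lam ^ 2)) < 1 :=
    Real.exp_lt_one_iff.mpr (by nlinarith [mul_pos hα (pow_pos hlam 2)])
  obtain ⟨hsum, htsum⟩ := summable_and_tsum_exp_sub_mul_sq_le hα hlam hy
  have hterm (k : ℤ) : ‖(cexp (α * ((j + y * I) - θ + k * lam * I) ^ 2) *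
      g ((j + y * I) + k * lam * I)) • f ((j + y * I) + k * lam * I)‖ ≤
        M * Bj * Real.exp (α - α * (y + k * lam) ^ 2) := by
    have hz : (j + y * I) + k * lam * I = j + ((y + k * lam : ℝ) : ℂ) * I := by push_cast; ring
    have hw : (j + y * I) - θ + k * lam * I = j - θ + ((y + k * lam : ℝ) : ℂ) * I := by
      push_cast; ring
    rw [hz, hw]
    exact norm_cexp_mul_sq_mul_smul_le hα.le (abs_le.mpr ⟨by linarith, by linarith⟩)
      (fun t => hgM _ (by simpa using hj0) (by simpa using hj1)) hBj _
  calc _ ≤ M * Bj * ∑' k : ℤ, Real.exp (α - α * (y + k * lam) ^ 2) :=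
        tsum_of_norm_bounded (hsum.hasSum.mul_left (M * Bj)) hterm
    _ ≤ M * Bj * (Real.exp α +
          2 * (Real.exp (α - α * lam ^ 2 / 4) / (1 - Real.exp (-(α * lam ^ 2))))) := by
      gcongr
    _ ≤ M * Bj * (Real.exp α + 2 * Real.exp (α - α * lam ^ 2 / 4) *
          (2 - Real.exp (-(α * lam ^ 2))) / (1 - Real.exp (-(α * lam ^ 2)))) := by
      rw [mul_assoc 2, mul_div_assoc 2]
      gcongr
      exact le_mul_of_one_le_right (Real.exp_pos _).le (by linarith)
    _ = _ := by ring

/-- With X a complex Banach space, λ, α > 0, 0 < θ < 1, g entire with |g| ≤ M on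
the strip 𝕊 = {0 ≤ Re z ≤ 1}, f : ℂ → X with ‖f‖ ≤ B on 𝕊, and
F_α(z) = ∑_{k ∈ ℤ} exp(α(z − θ + ikλ)²)·g(z + ikλ)·f(z + ikλ): for j ∈ {0,1} and |y| ≤ λ/2,
if ‖f(j + it)‖ ≤ B_j for all t ∈ ℝ, then ‖F_α(j + iy)‖ ≤ C₁,λ(α)·M·B_j, where
C₁,λ(α) = exp(α) + 2·exp(α − αλ²/4)·(2 − exp(−αλ²))/(1 − exp(−αλ²)). -/
theorem stmt_11 {X : Type*} [NormedAddCommGroup X] [NormedSpace ℂ X] [CompleteSpace X]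
    (lam α θ : ℝ) (hlam : 0 < lam) (hα : 0 < α) (hθ0 : 0 < θ) (hθ1 : θ < 1)
    (g : ℂ → ℂ) (hg : Differentiable ℂ g)
    (M : ℝ) (hgM : ∀ z : ℂ, 0 ≤ z.re → z.re ≤ 1 → ‖g z‖ ≤ M)
    (f : ℂ → X) (B : ℝ) (hfB : ∀ z : ℂ, 0 ≤ z.re → z.re ≤ 1 → ‖f z‖ ≤ B)
    (j : ℝ) (hj : j = 0 ∨ j = 1)
    (Bj : ℝ) (hBj : ∀ t : ℝ, ‖f ((j : ℂ) + (t : ℂ) * Complex.I)‖ ≤ Bj)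
    (y : ℝ) (hy : |y| ≤ lam / 2) :
    ‖∑' k : ℤ,
        (Complex.exp ((α : ℂ) *
            (((j : ℂ) + (y : ℂ) * Complex.I) - (θ : ℂ) + (k : ℂ) * (lam : ℂ) * Complex.I) ^ 2) *
          g (((j : ℂ) + (y : ℂ) * Complex.I) + (k : ℂ) * (lam : ℂ) * Complex.I)) •
            f (((j : ℂ) + (y : ℂ) * Complex.I) + (k : ℂ) * (lam : ℂ) * Complex.I)‖ ≤
      (Real.exp α + 2 * Real.exp (α - α * lam ^ 2 / 4) *
        (2 - Real.exp (-(α * lam ^ 2))) / (1 - Real.exp (-(α * lam ^ 2)))) * M * Bj :=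
  stmt_11_general lam α θ hlam hα hθ0 hθ1 g M hgM f j hj Bj hBj y hy
end
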